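/- arXiv:0807.4381 — 3 statements merged into one kernel-verified Lean document; each statement's English description precedes it below -/
import Mathlib

section
/- Let (λ_k) be a sequence of nonnegative reals, φ : [0,∞) → (0,∞), β ≥ 0, and let (u_k) be a real sequence such that Σ_k λ_k^{4α} u_k² exp(r φ(λ_k)) < ∞ for every r > 0. Then there exists a strictly increasing sequence of positive reals ρ_n → ∞ with ρ_0 = 0 and ρ_{n+1} ≥ ρ_n + 1 such that Σ_{λ_k ≥ ρ_{n+1}} λ_k^{4α} u_k² exp(ρ_n^β φ(λ_k)) ≤ ρ_n for every n ≥ 1. -/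
lemma stmt_9_key (lam u : ℕ → ℝ) (φ : ℝ → ℝ) (α β : ℝ)
    (hlam : ∀ k, 0 ≤ lam k)
    (hu : ∀ r > (0:ℝ),
      Summable (fun k => lam k ^ (4 * α) * (u k) ^ 2 * Real.exp (r * φ (lam k))))
    (c : ℝ) (hc : 0 < c) :
    ∃ M, c + 1 ≤ M ∧
      (∑' k, if M ≤ lam k then
          lam k ^ (4 * α) * (u k) ^ 2 * Real.exp (c ^ β * φ (lam k)) else 0) ≤ c := by
  have hr : 0 < c ^ β := Real.rpow_pos_of_pos hc β
  set a : ℕ → ℝ := fun k => lam k ^ (4 * α) * (u k) ^ 2 * Real.exp (c ^ β * φ (lam k))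
    with ha
  have hsum : Summable a := hu _ hr
  have hnn : ∀ k, 0 ≤ a k := fun k =>
    mul_nonneg (mul_nonneg (Real.rpow_nonneg (hlam k) _) (sq_nonneg _)) (Real.exp_pos _).le
  obtain ⟨s, hs⟩ := ((tendsto_tsum_compl_atTop_zero a).eventually (gt_mem_nhds hc)).exists
  set M : ℝ := max (c + 1) (1 + ∑ k ∈ s, lam k) with hM
  refine ⟨M, le_max_left _ _, ?_⟩
  have hnotmem : ∀ k, M ≤ lam k → k ∉ s := by
    intro k hk hks
    have h1 : lam k ≤ ∑ j ∈ s, lam j := Finset.single_le_sum (fun j _ => hlam j) hks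
    have h2 : (1 : ℝ) + ∑ j ∈ s, lam j ≤ M := le_max_right _ _
    linarith
  have hle : ∀ k, (if M ≤ lam k then a k else 0) ≤ Set.indicator {x | x ∉ s} a k := by
    intro k
    by_cases h : M ≤ lam k
    · simp only [h, if_true]
      exact le_of_eq (Set.indicator_of_mem (show k ∈ {x | x ∉ s} from hnotmem k h) a).symm
    · simp only [h, if_false]
      exact Set.indicator_nonneg (fun j _ => hnn j) k
  have hs1 : Summable (fun k => if M ≤ lam k then a k else 0) := by
    apply Summable.of_nonneg_of_le (fun k => ?_) (fun k => ?_) hsum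
    · split <;> [exact hnn k; exact le_rfl]
    · split <;> [exact le_rfl; exact hnn k]
  have hs2 : Summable (Set.indicator {x | x ∉ s} a) := hsum.indicator _
  calc (∑' k, if M ≤ lam k then a k else 0)
      ≤ ∑' k, Set.indicator {x | x ∉ s} a k := Summable.tsum_le_tsum hle hs1 hs2
    _ = ∑' k : {x | x ∉ s}, a k := (tsum_subtype _ _).symm
    _ ≤ c := le_of_lt hs

theorem stmt_9 (lam u : ℕ → ℝ) (φ : ℝ → ℝ) (α β : ℝ)
    (hlam : ∀ k, 0 ≤ lam k)
    (hφ : ∀ x ≥ (0:ℝ), 0 < φ x)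
    (hα : 0 ≤ α) (hβ : 0 ≤ β)
    (hu : ∀ r > (0:ℝ),
      Summable (fun k => lam k ^ (4 * α) * (u k) ^ 2 * Real.exp (r * φ (lam k)))) :
    ∃ ρ : ℕ → ℝ, ρ 0 = 0 ∧ StrictMono ρ ∧ (∀ n, ρ n + 1 ≤ ρ (n + 1)) ∧
      Filter.Tendsto ρ Filter.atTop Filter.atTop ∧
      ∀ n : ℕ, 1 ≤ n →
        (∑' k, if ρ (n + 1) ≤ lam k then
            lam k ^ (4 * α) * (u k) ^ 2 * Real.exp (ρ n ^ β * φ (lam k)) else 0) ≤ ρ n := by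
  have key := stmt_9_key lam u φ α β hlam hu
  choose F hF1 hF2 using key
  set g : ℝ → ℝ := fun c => if h : 0 < c then F c h else c + 1 with hg
  have hstep : ∀ c, c + 1 ≤ g c := by
    intro c
    by_cases h : 0 < c
    · simp only [hg, dif_pos h]; exact hF1 c h
    · simp only [hg, dif_neg h]; exact le_rfl
  set ρ : ℕ → ℝ := fun n => g^[n] 0 with hρ
  have hsucc : ∀ n, ρ (n + 1) = g (ρ n) := fun n => Function.iterate_succ_apply' g n 0
  have h0 : ρ 0 = 0 := rfl
  have h1 : ∀ n, ρ n + 1 ≤ ρ (n + 1) := fun n => (hsucc n) ▸ hstep (ρ n)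
  have hmono : StrictMono ρ := strictMono_nat_of_lt_succ (fun n => by
    have := h1 n; linarith)
  have hge : ∀ n : ℕ, (n : ℝ) ≤ ρ n := by
    intro n
    induction n with
    | zero => simp [h0]
    | succ m ih =>
      have := h1 m
      push_cast
      linarith
  have htend : Filter.Tendsto ρ Filter.atTop Filter.atTop :=
    Filter.tendsto_atTop_mono hge tendsto_natCast_atTop_atTop
  refine ⟨ρ, h0, hmono, h1, htend, ?_⟩
  intro n hn
  have hpos : 0 < ρ n := lt_of_lt_of_le (by exact_mod_cast hn) (hge n)
  have hrw : ρ (n + 1) = F (ρ n) hpos := by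
    rw [hsucc n]; simp only [hg, dif_pos hpos]
  rw [hrw]
  exact hF2 (ρ n) hpos
end

section
/- (Spectral gap decomposition.) Let (λ_k) be nonnegative reals, φ : [0,∞) → (0,∞), α ≥ 0, β ≥ 0, and let u ∈ H satisfy Σ_k λ_k^{4α} u_k² exp(r φ(λ_k)) < ∞ for every r > 0. Then there exist sequences (ρ̄_n) and (ρ̂_n) of positive reals tending to +∞, and a decomposition u = ū + û with Fourier components ū_k ∈ {0, u_k}, û_k = u_k - ū_k, such that Σ_{λ_k > ρ̄_n} λ_k^{4α} ū_k² exp(ρ̄_n^β φ(λ_k)) ≤ ρ̄_n for all n, and Σ_{λ_k > ρ̂_n} λ_k^{4α} û_k² exp(ρ̂_n^β φ(λ_k)) ≤ ρ̂_n for all n. -/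
open Filter Finset

lemma tail_aux (lam b : ℕ → ℝ) (hb0 : ∀ k, 0 ≤ b k) (hb : Summable b)
    (ε M : ℝ) (hε : 0 < ε) :
    ∃ ρ, M ≤ ρ ∧ (∑' k, if ρ < lam k then b k else 0) ≤ ε := by
  classical
  obtain ⟨N, hN⟩ : ∃ N, (∑' k, b (k + N)) < ε :=
    ((tendsto_sum_nat_add b).eventually (gt_mem_nhds hε)).exists
  set ρ := max M (∑ i ∈ range N, |lam i|) with hρ
  refine ⟨ρ, le_max_left _ _, ?_⟩
  set g : ℕ → ℝ := fun k => if ρ < lam k then b k else 0 with hg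
  have hg0 : ∀ k, 0 ≤ g k := by
    intro k; simp only [hg]
    split
    · exact hb0 k
    · exact le_refl 0
  have hgle : ∀ k, g k ≤ b k := by
    intro k; simp only [hg]
    split
    · exact le_refl _
    · exact hb0 k
  have hgsum : Summable g := Summable.of_nonneg_of_le hg0 hgle hb
  have hzero : ∀ k ∈ range N, g k = 0 := by
    intro k hk
    have h1 : lam k ≤ ∑ i ∈ range N, |lam i| :=
      le_trans (le_abs_self _) (Finset.single_le_sum (fun i _ => abs_nonneg (lam i)) hk)
    have : ¬ ρ < lam k := not_lt.2 (le_trans h1 (le_max_right _ _))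
    simp only [hg, this, if_false]
  calc tsum g = (∑ i ∈ range N, g i) + ∑' k, g (k + N) :=
        (Summable.sum_add_tsum_nat_add N hgsum).symm
    _ = ∑' k, g (k + N) := by rw [Finset.sum_eq_zero hzero, zero_add]
    _ ≤ ∑' k, b (k + N) := Summable.tsum_le_tsum (fun k => hgle _)
        ((summable_nat_add_iff N).2 hgsum) ((summable_nat_add_iff N).2 hb)
    _ ≤ ε := hN.le

theorem stmt_10 (lam u : ℕ → ℝ) (φ : ℝ → ℝ) (α β : ℝ)
    (hlam : ∀ k, 0 ≤ lam k)
    (hφ : ∀ x ≥ (0:ℝ), 0 < φ x)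
    (hα : 0 ≤ α) (hβ : 0 ≤ β)
    (hu : ∀ r > (0:ℝ),
      Summable (fun k => lam k ^ (4 * α) * (u k) ^ 2 * Real.exp (r * φ (lam k)))) :
    ∃ (ρbar ρhat : ℕ → ℝ) (ubar : ℕ → ℝ),
      (∀ n, 0 < ρbar n) ∧ (∀ n, 0 < ρhat n) ∧
      Filter.Tendsto ρbar Filter.atTop Filter.atTop ∧
      Filter.Tendsto ρhat Filter.atTop Filter.atTop ∧
      (∀ k, ubar k = 0 ∨ ubar k = u k) ∧
      (∀ n : ℕ,
        (∑' k, if ρbar n < lam k then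
            lam k ^ (4 * α) * (ubar k) ^ 2 * Real.exp (ρbar n ^ β * φ (lam k)) else 0)
          ≤ ρbar n) ∧
      (∀ n : ℕ,
        (∑' k, if ρhat n < lam k then
            lam k ^ (4 * α) * (u k - ubar k) ^ 2 * Real.exp (ρhat n ^ β * φ (lam k)) else 0)
          ≤ ρhat n) := by
  classical
  set a : ℕ → ℝ := fun k => lam k ^ (4 * α) * u k ^ 2 with ha
  have ha0 : ∀ k, 0 ≤ a k := fun k =>
    mul_nonneg (Real.rpow_nonneg (hlam k) _) (sq_nonneg _)
  have key : ∀ s : ℝ, 0 < s → ∃ t, s + 1 ≤ t ∧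
      (∑' k, if t < lam k then a k * Real.exp (s ^ β * φ (lam k)) else 0) ≤ s := by
    intro s hs
    have hr : 0 < s ^ β := Real.rpow_pos_of_pos hs β
    have hsum : Summable (fun k => a k * Real.exp (s ^ β * φ (lam k))) := by
      have := hu (s ^ β) hr
      simpa [ha, mul_assoc] using this
    have hb0 : ∀ k, 0 ≤ a k * Real.exp (s ^ β * φ (lam k)) := fun k =>
      mul_nonneg (ha0 k) (Real.exp_pos _).le
    obtain ⟨ρ, h1, h2⟩ := tail_aux lam _ hb0 hsum s (s + 1) hs
    exact ⟨ρ, h1, h2⟩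
  choose F hF1 hF2 using key
  let σp : ℕ → {s : ℝ // 0 < s} := fun n => Nat.rec ⟨1, one_pos⟩
    (fun _ p => ⟨F p.1 p.2, lt_of_lt_of_le (by linarith [p.2]) (hF1 p.1 p.2)⟩) n
  set σ : ℕ → ℝ := fun n => (σp n).1 with hσ
  have hpos : ∀ n, 0 < σ n := fun n => (σp n).2
  have hstep : ∀ n, σ n + 1 ≤ σ (n + 1) := fun n => hF1 (σ n) (σp n).2
  have htail : ∀ n, (∑' k, if σ (n + 1) < lam k then
      a k * Real.exp (σ n ^ β * φ (lam k)) else 0) ≤ σ n := fun n => hF2 (σ n) (σp n).2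
  have hmono : StrictMono σ :=
    strictMono_nat_of_lt_succ (fun n => lt_of_lt_of_le (lt_add_one _) (hstep n))
  have hlb : ∀ n : ℕ, (n : ℝ) + 1 ≤ σ n := by
    intro n
    induction n with
    | zero => simp [hσ, σp]
    | succ m ih =>
      have := hstep m
      push_cast
      push_cast at ih
      linarith
  have hσtop : Tendsto σ atTop atTop := by
    apply tendsto_atTop_mono (fun n => ?_) tendsto_natCast_atTop_atTop
    linarith [hlb n]
  set ubar : ℕ → ℝ :=
    fun k => if ∃ j : ℕ, σ (2 * j) < lam k ∧ lam k ≤ σ (2 * j + 1) then u k else 0 with hubar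
  refine ⟨fun n => σ (2 * n + 1), fun n => σ (2 * n + 2), ubar,
    fun n => hpos (2 * n + 1), fun n => hpos (2 * n + 2), ?_, ?_, ?_, ?_, ?_⟩
  · exact hσtop.comp ((strictMono_nat_of_lt_succ (fun n => by omega :
      ∀ n : ℕ, 2 * n + 1 < 2 * (n + 1) + 1)).tendsto_atTop)
  · exact hσtop.comp ((strictMono_nat_of_lt_succ (fun n => by omega :
      ∀ n : ℕ, 2 * n + 2 < 2 * (n + 1) + 2)).tendsto_atTop)
  · intro k
    simp only [hubar]
    split
    · exact Or.inr rfl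
    · exact Or.inl rfl
  · -- bar bound
    intro n
    have hr : 0 < σ (2 * n + 1) ^ β := Real.rpow_pos_of_pos (hpos (2 * n + 1)) β
    have hbsum : Summable (fun k => a k * Real.exp (σ (2 * n + 1) ^ β * φ (lam k))) := by
      have := hu _ hr
      simpa [ha, mul_assoc] using this
    set g : ℕ → ℝ := fun k => if σ (2 * n + 2) < lam k then
        a k * Real.exp (σ (2 * n + 1) ^ β * φ (lam k)) else 0 with hg
    have hg0 : ∀ k, 0 ≤ g k := by
      intro k; simp only [hg]; split
      · exact mul_nonneg (ha0 k) (Real.exp_pos _).le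
      · exact le_refl 0
    have hgsum : Summable g := Summable.of_nonneg_of_le hg0
      (fun k => by
        simp only [hg]; split
        · exact le_refl _
        · exact mul_nonneg (ha0 k) (Real.exp_pos _).le) hbsum
    have hfg : ∀ k, (if σ (2 * n + 1) < lam k then
        lam k ^ (4 * α) * (ubar k) ^ 2 * Real.exp (σ (2 * n + 1) ^ β * φ (lam k)) else 0) ≤ g k := by
      intro k
      by_cases h1 : σ (2 * n + 1) < lam k
      · rw [if_pos h1]
        by_cases h2 : ∃ j : ℕ, σ (2 * j) < lam k ∧ lam k ≤ σ (2 * j + 1)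
        · obtain ⟨j, hj1, hj2⟩ := h2
          have hjn : 2 * n + 1 < 2 * j + 1 := hmono.lt_iff_lt.1 (lt_of_lt_of_le h1 hj2)
          have h3 : σ (2 * n + 2) < lam k :=
            lt_of_le_of_lt (hmono.monotone (by omega : 2 * n + 2 ≤ 2 * j)) hj1
          have hub : ubar k = u k := by
            simp only [hubar]
            rw [if_pos ⟨j, hj1, hj2⟩]
          rw [hub]
          simp only [hg, ha]
          rw [if_pos h3]
        · have hub : ubar k = 0 := by simp only [hubar]; rw [if_neg h2]
          rw [hub]
          simpa using hg0 k
      · rw [if_neg h1]; exact hg0 k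
    have hfsum : Summable (fun k => if σ (2 * n + 1) < lam k then
        lam k ^ (4 * α) * (ubar k) ^ 2 * Real.exp (σ (2 * n + 1) ^ β * φ (lam k)) else 0) := by
      apply Summable.of_nonneg_of_le (fun k => ?_) hfg hgsum
      split
      · exact mul_nonneg (mul_nonneg (Real.rpow_nonneg (hlam k) _) (sq_nonneg _))
          (Real.exp_pos _).le
      · exact le_refl 0
    calc (∑' k, if σ (2 * n + 1) < lam k then
            lam k ^ (4 * α) * (ubar k) ^ 2 * Real.exp (σ (2 * n + 1) ^ β * φ (lam k)) else 0)
        ≤ ∑' k, g k := Summable.tsum_le_tsum hfg hfsum hgsum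
      _ ≤ σ (2 * n + 1) := htail (2 * n + 1)
  · -- hat bound
    intro n
    have hr : 0 < σ (2 * n + 2) ^ β := Real.rpow_pos_of_pos (hpos (2 * n + 2)) β
    have hbsum : Summable (fun k => a k * Real.exp (σ (2 * n + 2) ^ β * φ (lam k))) := by
      have := hu _ hr
      simpa [ha, mul_assoc] using this
    set g : ℕ → ℝ := fun k => if σ (2 * n + 3) < lam k then
        a k * Real.exp (σ (2 * n + 2) ^ β * φ (lam k)) else 0 with hg
    have hg0 : ∀ k, 0 ≤ g k := by
      intro k; simp only [hg]; split
      · exact mul_nonneg (ha0 k) (Real.exp_pos _).le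
      · exact le_refl 0
    have hgsum : Summable g := Summable.of_nonneg_of_le hg0
      (fun k => by
        simp only [hg]; split
        · exact le_refl _
        · exact mul_nonneg (ha0 k) (Real.exp_pos _).le) hbsum
    have hfg : ∀ k, (if σ (2 * n + 2) < lam k then
        lam k ^ (4 * α) * (u k - ubar k) ^ 2 * Real.exp (σ (2 * n + 2) ^ β * φ (lam k)) else 0) ≤ g k := by
      intro k
      by_cases h1 : σ (2 * n + 2) < lam k
      · rw [if_pos h1]
        by_cases h2 : ∃ j : ℕ, σ (2 * j) < lam k ∧ lam k ≤ σ (2 * j + 1)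
        · have hub : ubar k = u k := by simp only [hubar]; rw [if_pos h2]
          rw [hub]
          simpa using hg0 k
        · have hub : ubar k = 0 := by simp only [hubar]; rw [if_neg h2]
          have h3 : σ (2 * n + 3) < lam k := by
            by_contra hcon
            exact h2 ⟨n + 1, by
              constructor
              · have : σ (2 * (n + 1)) = σ (2 * n + 2) := by norm_num [mul_add]
                rw [this]; exact h1
              · have : σ (2 * (n + 1) + 1) = σ (2 * n + 3) := by norm_num [mul_add]
                rw [this]; exact le_of_not_gt hcon⟩
          rw [hub, sub_zero]
          simp only [hg, ha]
          rw [if_pos h3]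
      · rw [if_neg h1]; exact hg0 k
    have hfsum : Summable (fun k => if σ (2 * n + 2) < lam k then
        lam k ^ (4 * α) * (u k - ubar k) ^ 2 * Real.exp (σ (2 * n + 2) ^ β * φ (lam k)) else 0) := by
      apply Summable.of_nonneg_of_le (fun k => ?_) hfg hgsum
      split
      · exact mul_nonneg (mul_nonneg (Real.rpow_nonneg (hlam k) _) (sq_nonneg _))
          (Real.exp_pos _).le
      · exact le_refl 0
    calc (∑' k, if σ (2 * n + 2) < lam k then
            lam k ^ (4 * α) * (u k - ubar k) ^ 2 * Real.exp (σ (2 * n + 2) ^ β * φ (lam k)) else 0)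
        ≤ ∑' k, g k := Summable.tsum_le_tsum hfg hfsum hgsum
      _ ≤ σ (2 * n + 2) := htail (2 * n + 2)
end

section
/- Let c : [0,T] → ℝ be differentiable with c(t) ≥ ν > 0, and define for each k the energy E_k(t) := |u_k'(t)|² + λ_k² c(t) |u_k(t)|² along a solution of u_k'' + λ_k² c₀(t) u_k = 0 where c₀ : [0,T] → ℝ is continuous. Then E_k'(t) ≤ ( |c'(t)|/c(t) + λ_k |c(t)-c₀(t)|/√(c(t)) ) · E_k(t) for all t ∈ [0,T]. -/
/-!
Differentiating `E = u'² + λ² c u²` and using the equation `u'' = -λ² c₀ u` gives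
`E' = λ² c' u² + 2 λ² (c - c₀) u u'`. The first term is at most `|c'|/c` times the potential
part `λ² c u²`; the second is at most `λ |c - c₀| / √c` times `E`, by AM-GM applied to
`u'` and `λ √c u`.
-/

open Real

theorem hasDerivAt_energy {c u u' : ℝ → ℝ} {dc w t : ℝ} (l : ℝ) (hc : HasDerivAt c dc t)
    (hu : HasDerivAt u (u' t) t) (hu' : HasDerivAt u' w t) :
    HasDerivAt (fun s => u' s ^ 2 + l ^ 2 * c s * u s ^ 2)
      (2 * u' t * w + l ^ 2 * (dc * u t ^ 2 + 2 * c t * u t * u' t)) t := by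
  have h := (hu'.fun_pow 2).fun_add ((hc.fun_mul (hu.fun_pow 2)).const_mul (l ^ 2))
  simp only [← mul_assoc] at h
  exact h.congr_deriv (by push_cast; ring)

theorem mul_sq_le_div_mul_energy {l c γ a b : ℝ} (hc : 0 < c) :
    l ^ 2 * γ * a ^ 2 ≤ |γ| / c * (b ^ 2 + l ^ 2 * c * a ^ 2) := by
  have hpot : |γ| / c * (l ^ 2 * c * a ^ 2) = |γ| * (l ^ 2 * a ^ 2) := by
    field_simp
  have hkin : 0 ≤ |γ| / c * b ^ 2 := by positivity
  nlinarith [mul_le_mul_of_nonneg_right (le_abs_self γ) (by positivity : 0 ≤ l ^ 2 * a ^ 2)]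

theorem cross_term_le_mul_energy {l c δ a b : ℝ} (hl : 0 ≤ l) (hc : 0 < c) :
    2 * l ^ 2 * δ * a * b ≤ l * |δ| / √c * (b ^ 2 + l ^ 2 * c * a ^ 2) := by
  have hs : 0 < √c := sqrt_pos.mpr hc
  have hamgm : 2 * |b| * (l * √c * |a|) ≤ b ^ 2 + l ^ 2 * c * a ^ 2 := by
    have := two_mul_le_add_sq |b| (l * √c * |a|)
    rwa [mul_pow, mul_pow, sq_sqrt hc.le, sq_abs, sq_abs] at this
  calc 2 * l ^ 2 * δ * a * b ≤ 2 * l ^ 2 * |δ| * |a| * |b| := by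
        refine (le_abs_self _).trans_eq ?_
        simp only [abs_mul, abs_of_nonneg (by positivity : (0:ℝ) ≤ 2 * l ^ 2)]
    _ = l * |δ| / √c * (2 * |b| * (l * √c * |a|)) := by field_simp
    _ ≤ l * |δ| / √c * (b ^ 2 + l ^ 2 * c * a ^ 2) := by gcongr

theorem stmt_11_general (T ν lamk : ℝ) (c c' c₀ u u' : ℝ → ℝ)
    (hν : 0 < ν) (hlam : 0 ≤ lamk)
    (hc : ∀ t, HasDerivAt c (c' t) t)
    (hclow : ∀ t ∈ Set.Icc 0 T, ν ≤ c t)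
    (hu : ∀ t, HasDerivAt u (u' t) t)
    (hu' : ∀ t, HasDerivAt u' (-(lamk ^ 2 * c₀ t * u t)) t) :
    ∀ t ∈ Set.Icc (0:ℝ) T,
      ∃ d : ℝ,
        HasDerivAt (fun s => (u' s) ^ 2 + lamk ^ 2 * c s * (u s) ^ 2) d t ∧
        d ≤ (|c' t| / c t + lamk * |c t - c₀ t| / Real.sqrt (c t)) *
              ((u' t) ^ 2 + lamk ^ 2 * c t * (u t) ^ 2) := by
  intro t ht
  have hct : 0 < c t := hν.trans_le (hclow t ht)
  refine ⟨lamk ^ 2 * c' t * u t ^ 2 + 2 * lamk ^ 2 * (c t - c₀ t) * u t * u' t, ?_, ?_⟩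
  · convert hasDerivAt_energy lamk (hc t) (hu t) (hu' t) using 1
    ring
  · rw [add_mul]
    exact add_le_add (mul_sq_le_div_mul_energy hct) (cross_term_le_mul_energy hlam hct)

theorem stmt_11 (T ν lamk : ℝ) (c c' c₀ u u' : ℝ → ℝ)
    (hT : 0 < T) (hν : 0 < ν) (hlam : 0 ≤ lamk)
    (hc₀ : Continuous c₀)
    (hc : ∀ t, HasDerivAt c (c' t) t)
    (hclow : ∀ t ∈ Set.Icc 0 T, ν ≤ c t)
    (hu : ∀ t, HasDerivAt u (u' t) t)
    (hu' : ∀ t, HasDerivAt u' (-(lamk ^ 2 * c₀ t * u t)) t) :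
    ∀ t ∈ Set.Icc (0:ℝ) T,
      ∃ d : ℝ,
        HasDerivAt (fun s => (u' s) ^ 2 + lamk ^ 2 * c s * (u s) ^ 2) d t ∧
        d ≤ (|c' t| / c t + lamk * |c t - c₀ t| / Real.sqrt (c t)) *
              ((u' t) ^ 2 + lamk ^ 2 * c t * (u t) ^ 2) :=
  stmt_11_general T ν lamk c c' c₀ u u' hν hlam hc hclow hu hu'
end
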